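/- Immunity to tautologies: if ⟨P_i⟩_{i<n} is a dynamic logic program and ⟨Q_i⟩_{i<n} is a sequence of sets of tautologies, then the extended WS-models and the extended RD-models of ⟨P_i ∪ Q_i⟩_{i<n} coincide with those of ⟨P_i⟩_{i<n}, i.e. WS'(⟨P_i ∪ Q_i⟩_{i<n}) = WS'(⟨P_i⟩_{i<n}) and RD'(⟨P_i ∪ Q_i⟩_{i<n}) = RD'(⟨P_i⟩_{i<n}). -/
import Mathlib


namespace RuleUpdates

/-- Objective literal: an atom (a natural number) or its strong negation. -/
inductive OLit where
  | pos : ℕ → OLit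
  | neg : ℕ → OLit
deriving DecidableEq

/-- Strong negation on objective literals (with ¬¬p identified with p). -/
def OLit.compl : OLit → OLit
  | .pos p => .neg p
  | .neg p => .pos p

/-- Literal: an objective literal or its default negation (not not l = l). -/
inductive Lit where
  | obj : OLit → Lit
  | ndef : OLit → Lit
deriving DecidableEq

/-- Extended rule: a head literal and a finite set of body literals. -/
structure Rule where
  head : Lit
  body : Finset Lit

/-- Interpretation: a consistent set of objective literals. -/
def Interp (J : Set OLit) : Prop :=
  ∀ p : ℕ, ¬ (OLit.pos p ∈ J ∧ OLit.neg p ∈ J)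

/-- Satisfaction of a literal. -/
def satLit (J : Set OLit) : Lit → Prop
  | .obj l => l ∈ J
  | .ndef l => l ∉ J

/-- Satisfaction of a set of body literals. -/
def satBody (J : Set OLit) (B : Finset Lit) : Prop :=
  ∀ L ∈ B, satLit J L

/-- Satisfaction of a rule. -/
def satRule (J : Set OLit) (π : Rule) : Prop :=
  satBody J π.body → satLit J π.head

/-- J is a model of a program. -/
def isModel (J : Set OLit) (P : Set Rule) : Prop :=
  ∀ π ∈ P, satRule J π

/-- J* = J ∪ { not l | l ∈ ℒ ∖ J }, as a set of literals. -/
def star (J : Set OLit) : Set Lit :=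
  {L | ∃ l : OLit, (L = Lit.obj l ∧ l ∈ J) ∨ (L = Lit.ndef l ∧ l ∉ J)}

/-- def(J) = { (not l.) | l ∈ ℒ ∖ J }. -/
def defFacts (J : Set OLit) : Set Rule :=
  {π | ∃ l : OLit, l ∉ J ∧ π = ⟨Lit.ndef l, ∅⟩}

/-- S (a set of literals) is closed under program P, all literals
treated as distinct propositional atoms. -/
def closedUnder (P : Set Rule) (S : Set Lit) : Prop :=
  ∀ π ∈ P, (π.body : Set Lit) ⊆ S → π.head ∈ S

/-- least(P): the least model of P when all literals are treated as
distinct propositional atoms. -/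
def leastModel (P : Set Rule) : Set Lit :=
  ⋂₀ {S | closedUnder P S}

/-- Stable model of an extended program: J* = least(P ∪ def(J)). -/
def isStableModel (P : Set Rule) (J : Set OLit) : Prop :=
  Interp J ∧ star J = leastModel (P ∪ defFacts J)

/-- Level of a literal, with ℓ(not l) = ℓ(l). -/
def litLevel (ℓ : OLit → ℕ) : Lit → ℕ
  | .obj l => ℓ l
  | .ndef l => ℓ l

/-- ℓ↑(S): the maximal level of a literal in the finite set S. -/
def supLevel (ℓ : OLit → ℕ) (S : Finset Lit) : ℕ :=
  S.sup (litLevel ℓ)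

/-- ℓ↓(S): the minimal level of a literal in the finite set S. -/
noncomputable def infLevel (ℓ : OLit → ℕ) (S : Finset Lit) : ℕ :=
  sInf (litLevel ℓ '' (S : Set Lit))

/-- Well-supported model of an extended program w.r.t. a level mapping ℓ. -/
def isWSModelWith (P : Set Rule) (J : Set OLit) (ℓ : OLit → ℕ) : Prop :=
  isModel J P ∧
    ∀ l ∈ J, ∃ π ∈ P, π.head = Lit.obj l ∧ satBody J π.body ∧
      supLevel ℓ π.body < ℓ l

/-- Well-supported model of an extended program. -/
def isWSModel (P : Set Rule) (J : Set OLit) : Prop :=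
  Interp J ∧ ∃ ℓ : OLit → ℕ, isWSModelWith P J ℓ

/-- con(L): the literals in conflict with L. -/
def con : Lit → Finset Lit
  | .obj l => {Lit.ndef l, Lit.obj l.compl}
  | .ndef l => {Lit.obj l}

/-- ρ(P): all rules occurring in the components of the DLP. -/
def allRules {n : ℕ} (P : Fin n → Set Rule) : Set Rule :=
  {π | ∃ i : Fin n, π ∈ P i}

/-- The rule π ∈ P i is rejected w.r.t. the set of literals S:
some later σ with conflicting head has its body included in S. -/
def rejIn {n : ℕ} (P : Fin n → Set Rule) (S : Set Lit) (i : Fin n) (π : Rule) : Prop :=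
  ∃ j : Fin n, i < j ∧ ∃ σ ∈ P j, σ.head ∈ con π.head ∧ (σ.body : Set Lit) ⊆ S

/-- rem(P, S) = ρ(P) ∖ rej(P, S), as a set of component-indexed rules. -/
def remSet {n : ℕ} (P : Fin n → Set Rule) (S : Set Lit) : Set (Fin n × Rule) :=
  {x | x.2 ∈ P x.1 ∧ ¬ rejIn P S x.1 x.2}

/-- The operator T_{P,J}. -/
def TOp {n : ℕ} (P : Fin n → Set Rule) (J : Set OLit) (S : Set Lit) : Set Lit :=
  {L | ((∃ x ∈ remSet P (star J), x.2.head = L ∧ (x.2.body : Set Lit) ⊆ S) ∨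
        (∃ l : OLit, l ∉ J ∧ L = Lit.ndef l)) ∧
       ¬ ∃ σ ∈ remSet P S, σ.2.head ∈ con L ∧ (σ.2.body : Set Lit) ⊆ star J}

/-- Iterates of T_{P,J} starting from ∅. -/
def TIter {n : ℕ} (P : Fin n → Set Rule) (J : Set OLit) : ℕ → Set Lit
  | 0 => ∅
  | k + 1 => TOp P J (TIter P J k)

/-- Extended RD-model of a DLP: J* = ⋃_{k≥0} T_{P,J}^k(∅). -/
def isExtRD {n : ℕ} (P : Fin n → Set Rule) (J : Set OLit) : Prop :=
  Interp J ∧ star J = ⋃ k : ℕ, TIter P J k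

/-- rej^ℓ(P, J): π ∈ P i is rejected w.r.t. J and the level mapping ℓ. -/
def rejLvl {n : ℕ} (P : Fin n → Set Rule) (J : Set OLit) (ℓ : OLit → ℕ)
    (i : Fin n) (π : Rule) : Prop :=
  ∃ j : Fin n, i < j ∧ ∃ σ ∈ P j, σ.head ∈ con π.head ∧ satBody J σ.body ∧
    supLevel ℓ σ.body < infLevel ℓ (con π.head)

/-- Extended WS-model of a DLP. -/
def isExtWS {n : ℕ} (P : Fin n → Set Rule) (J : Set OLit) : Prop :=
  Interp J ∧ ∃ ℓ : OLit → ℕ,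
    (∀ i : Fin n, ∀ π ∈ P i, ¬ rejLvl P J ℓ i π → satRule J π) ∧
    (∀ l ∈ J, ∃ x ∈ remSet P (star J), x.2.head = Lit.obj l ∧ satBody J x.2.body ∧
      supLevel ℓ x.2.body < ℓ l)

/-- A program is acyclic w.r.t. a level mapping ℓ. -/
def acyclicWrt (Q : Set Rule) (ℓ : OLit → ℕ) : Prop :=
  (∀ l : OLit, ℓ l = ℓ l.compl) ∧ ∀ π ∈ Q, supLevel ℓ π.body < litLevel ℓ π.head

/-! ### Auxiliary lemmas -/

@[simp] lemma OLit.compl_compl (l : OLit) : l.compl.compl = l := by cases l <;> rfl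

lemma mem_con_comm {A B : Lit} (h : A ∈ con B) : B ∈ con A := by
  rcases A with l | l <;> rcases B with m | m <;>
    simp only [con, Finset.mem_insert, Finset.mem_singleton, Lit.obj.injEq,
      Lit.ndef.injEq] at h ⊢ <;> aesop

@[simp] lemma obj_mem_star {J : Set OLit} {l : OLit} : Lit.obj l ∈ star J ↔ l ∈ J := by
  simp [star]

@[simp] lemma ndef_mem_star {J : Set OLit} {l : OLit} : Lit.ndef l ∈ star J ↔ l ∉ J := by
  simp [star]

lemma interp_compl {J : Set OLit} (hJ : Interp J) {l : OLit} (h1 : l ∈ J)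
    (h2 : l.compl ∈ J) : False := by
  cases l with
  | pos p => exact hJ p ⟨h1, h2⟩
  | neg p => exact hJ p ⟨h2, h1⟩

lemma con_notMem_star {J : Set OLit} (hJ : Interp J) {L M : Lit}
    (hL : L ∈ star J) (hM : M ∈ con L) : M ∉ star J := by
  intro hMs
  rcases L with l | l
  · rw [obj_mem_star] at hL
    simp only [con, Finset.mem_insert, Finset.mem_singleton] at hM
    rcases hM with rfl | rfl
    · rw [ndef_mem_star] at hMs; exact hMs hL
    · rw [obj_mem_star] at hMs; exact interp_compl hJ hL hMs
  · rw [ndef_mem_star] at hL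
    simp only [con, Finset.mem_singleton] at hM
    subst hM
    rw [obj_mem_star] at hMs; exact hL hMs

lemma exists_con_mem_star {J : Set OLit} {L : Lit} (hL : L ∉ star J) :
    ∃ M ∈ con L, M ∈ star J := by
  rcases L with l | l
  · rw [obj_mem_star] at hL
    exact ⟨Lit.ndef l, by simp [con], ndef_mem_star.mpr hL⟩
  · rw [ndef_mem_star, not_not] at hL
    exact ⟨Lit.obj l, by simp [con], obj_mem_star.mpr hL⟩

lemma rejIn_mono_prog {n : ℕ} {P R : Fin n → Set Rule} (h : ∀ i, P i ⊆ R i)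
    {S : Set Lit} {i : Fin n} {π : Rule} (hr : rejIn P S i π) : rejIn R S i π := by
  obtain ⟨j, hij, σ, hσ, h1, h2⟩ := hr
  exact ⟨j, hij, σ, h j hσ, h1, h2⟩

lemma rejIn_mono_set {n : ℕ} {P : Fin n → Set Rule} {S S' : Set Lit} (h : S ⊆ S')
    {i : Fin n} {π : Rule} (hr : rejIn P S i π) : rejIn P S' i π := by
  obtain ⟨j, hij, σ, hσ, h1, h2⟩ := hr
  exact ⟨j, hij, σ, hσ, h1, h2.trans h⟩

lemma remSet_anti {n : ℕ} {P : Fin n → Set Rule} {S S' : Set Lit} (h : S ⊆ S') :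
    remSet P S' ⊆ remSet P S :=
  fun x hx => ⟨hx.1, fun hr => hx.2 (rejIn_mono_set h hr)⟩

lemma TOp_mono {n : ℕ} {P : Fin n → Set Rule} {J : Set OLit} {S S' : Set Lit}
    (h : S ⊆ S') : TOp P J S ⊆ TOp P J S' := by
  rintro L ⟨hprod, hblock⟩
  refine ⟨?_, ?_⟩
  · rcases hprod with ⟨x, hx, hh, hb⟩ | hd
    · exact Or.inl ⟨x, hx, hh, hb.trans h⟩
    · exact Or.inr hd
  · rintro ⟨σ, hσ, hc, hb⟩
    exact hblock ⟨σ, remSet_anti h hσ, hc, hb⟩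

lemma TIter_succ_mono {n : ℕ} {P : Fin n → Set Rule} {J : Set OLit} :
    ∀ k, TIter P J k ⊆ TIter P J (k + 1) := by
  intro k
  induction k with
  | zero => exact Set.empty_subset _
  | succ k ih => exact TOp_mono ih

lemma TIter_sub_star {n : ℕ} {P : Fin n → Set Rule} {J : Set OLit}
    (hfix : star J = ⋃ k, TIter P J k) (k : ℕ) : TIter P J k ⊆ star J := by
  rw [hfix]; exact Set.subset_iUnion (TIter P J) k

lemma rejLvl_union_iff {n : ℕ} {P Q : Fin n → Set Rule}
    (htaut : ∀ i : Fin n, ∀ π ∈ Q i, π.head ∈ π.body)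
    {J : Set OLit} {ℓ : OLit → ℕ} {i : Fin n} {π : Rule} :
    rejLvl (fun i => P i ∪ Q i) J ℓ i π ↔ rejLvl P J ℓ i π := by
  constructor
  · rintro ⟨j, hij, σ, hσ, hcon, hsat, hlt⟩
    rcases hσ with hσ | hσ
    · exact ⟨j, hij, σ, hσ, hcon, hsat, hlt⟩
    · exfalso
      have h1 : litLevel ℓ σ.head ≤ supLevel ℓ σ.body := Finset.le_sup (htaut j σ hσ)
      have h2 : infLevel ℓ (con π.head) ≤ litLevel ℓ σ.head :=
        Nat.sInf_le ⟨σ.head, Finset.mem_coe.mpr hcon, rfl⟩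
      omega
  · rintro ⟨j, hij, σ, hσ, h⟩
    exact ⟨j, hij, σ, Or.inl hσ, h⟩

lemma extWS_iff {n : ℕ} {P Q : Fin n → Set Rule}
    (htaut : ∀ i : Fin n, ∀ π ∈ Q i, π.head ∈ π.body) (J : Set OLit) :
    isExtWS (fun i => P i ∪ Q i) J ↔ isExtWS P J := by
  constructor
  · rintro ⟨hJ, ℓ, hmod, hsupp⟩
    refine ⟨hJ, ℓ, ?_, ?_⟩
    · intro i π hπ hrej
      exact hmod i π (Or.inl hπ) fun h => hrej ((rejLvl_union_iff htaut).mp h)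
    · intro l hl
      obtain ⟨x, hxmem, hhead, hbody, hlev⟩ := hsupp l hl
      obtain ⟨hx1, hx2⟩ := hxmem
      rcases hx1 with hxP | hxQ
      · exact ⟨x, ⟨hxP, fun h => hx2 (rejIn_mono_prog (fun i => Set.subset_union_left) h)⟩,
          hhead, hbody, hlev⟩
      · exfalso
        have h1 : litLevel ℓ x.2.head ≤ supLevel ℓ x.2.body :=
          Finset.le_sup (htaut x.1 x.2 hxQ)
        rw [hhead] at h1
        simp only [litLevel] at h1
        omega
  · rintro ⟨hJ, ℓ, hmod, hsupp⟩
    refine ⟨hJ, ℓ, ?_, ?_⟩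
    · intro i π hπ hrej
      rcases hπ with hπ | hπ
      · exact hmod i π hπ fun h => hrej ((rejLvl_union_iff htaut).mpr h)
      · intro hb
        exact hb π.head (htaut i π hπ)
    · intro l hl
      obtain ⟨x, hxmem, hhead, hbody, hlev⟩ := hsupp l hl
      obtain ⟨hx1, hx2⟩ := hxmem
      refine ⟨x, ⟨Or.inl hx1, ?_⟩, hhead, hbody, hlev⟩
      rintro ⟨j, hij, τ, hτ, hcon, hbs⟩
      rcases hτ with hτ | hτ
      · exact hx2 ⟨j, hij, τ, hτ, hcon, hbs⟩
      · have hhs : τ.head ∈ star J := hbs (Finset.mem_coe.mpr (htaut j τ hτ))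
        rw [hhead] at hcon
        exact con_notMem_star hJ (obj_mem_star.mpr hl) hcon hhs

/-- Direction 1 core: if `S ⊆ J*`, `S ⊆ T_P(S)` and `T_P(S) ⊆ J*`, adding
tautologies does not change the value of the operator at `S`. -/
lemma TOp_union_eq_of_P {n : ℕ} {P Q : Fin n → Set Rule}
    (htaut : ∀ i : Fin n, ∀ π ∈ Q i, π.head ∈ π.body)
    {J : Set OLit} (hJ : Interp J) {S : Set Lit}
    (hS2 : S ⊆ TOp P J S) (hS3 : TOp P J S ⊆ star J) :
    TOp (fun i => P i ∪ Q i) J S = TOp P J S := by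
  apply Set.Subset.antisymm
  · rintro L ⟨hprod, hblock⟩
    have hnb : ¬ ∃ σ ∈ remSet P S, σ.2.head ∈ con L ∧ (σ.2.body : Set Lit) ⊆ star J := by
      rintro ⟨σ, hσmem, hσcon, hσb⟩
      by_cases hrej : rejIn (fun i => P i ∪ Q i) S σ.1 σ.2
      · obtain ⟨j, hij, τ, hτ, hτcon, hτb⟩ := hrej
        rcases hτ with hτ | hτ
        · exact hσmem.2 ⟨j, hij, τ, hτ, hτcon, hτb⟩
        · have hhS : τ.head ∈ S := hτb (Finset.mem_coe.mpr (htaut j τ hτ))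
          obtain ⟨-, hblk⟩ := hS2 hhS
          exact hblk ⟨σ, hσmem, mem_con_comm hτcon, hσb⟩
      · exact hblock ⟨σ, ⟨Or.inl hσmem.1, hrej⟩, hσcon, hσb⟩
    rcases hprod with ⟨x, hx, hh, hb⟩ | hd
    · rcases hx.1 with hxP | hxQ
      · exact ⟨Or.inl ⟨x, ⟨hxP, fun h =>
          hx.2 (rejIn_mono_prog (fun i => Set.subset_union_left) h)⟩, hh, hb⟩, hnb⟩
      · exact hS2 (hb (by rw [← hh]; exact Finset.mem_coe.mpr (htaut x.1 x.2 hxQ)))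
    · exact ⟨Or.inr hd, hnb⟩
  · rintro L ⟨hprod, hblock⟩
    have hLs : L ∈ star J := hS3 ⟨hprod, hblock⟩
    constructor
    · rcases hprod with ⟨x, hx, hh, hb⟩ | hd
      · refine Or.inl ⟨x, ⟨Or.inl hx.1, ?_⟩, hh, hb⟩
        rintro ⟨j, hij, τ, hτ, hτcon, hτb⟩
        rcases hτ with hτ | hτ
        · exact hx.2 ⟨j, hij, τ, hτ, hτcon, hτb⟩
        · have hτs : τ.head ∈ star J := hτb (Finset.mem_coe.mpr (htaut j τ hτ))
          rw [hh] at hτcon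
          exact con_notMem_star hJ hLs hτcon hτs
      · exact Or.inr hd
    · rintro ⟨σ, hσmem, hσcon, hσb⟩
      rcases hσmem.1 with hσP | hσQ
      · exact hblock ⟨σ, ⟨hσP, fun h =>
          hσmem.2 (rejIn_mono_prog (fun i => Set.subset_union_left) h)⟩, hσcon, hσb⟩
      · have hσs : σ.2.head ∈ star J := hσb (Finset.mem_coe.mpr (htaut σ.1 σ.2 hσQ))
        exact con_notMem_star hJ hLs hσcon hσs

lemma dir1_iter {n : ℕ} {P Q : Fin n → Set Rule}
    (htaut : ∀ i : Fin n, ∀ π ∈ Q i, π.head ∈ π.body)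
    {J : Set OLit} (hJ : Interp J) (hfix : star J = ⋃ k, TIter P J k) :
    ∀ k, TIter (fun i => P i ∪ Q i) J k = TIter P J k := by
  intro k
  induction k with
  | zero => rfl
  | succ k ih =>
    show TOp _ J (TIter _ J k) = TOp P J (TIter P J k)
    rw [ih]
    exact TOp_union_eq_of_P htaut hJ (TIter_succ_mono k) (TIter_sub_star hfix (k + 1))

/-- Direction 2 core: if `J* = ⋃ T^k_{P∪Q}(∅)`, then at each iterate the operator
of `P ∪ Q` is included in the operator of `P`. -/
lemma claim_PQ {n : ℕ} {P Q : Fin n → Set Rule}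
    (htaut : ∀ i : Fin n, ∀ π ∈ Q i, π.head ∈ π.body)
    {J : Set OLit}
    (hfix : star J = ⋃ k, TIter (fun i => P i ∪ Q i) J k) :
    ∀ k, TOp (fun i => P i ∪ Q i) J (TIter (fun i => P i ∪ Q i) J k)
      ⊆ TOp P J (TIter (fun i => P i ∪ Q i) J k) := by
  intro k
  induction k using Nat.strong_induction_on with
  | _ k ih =>
    have hmemS : ∀ M ∈ TIter (fun i => P i ∪ Q i) J k,
        M ∈ TOp P J (TIter (fun i => P i ∪ Q i) J k) := by
      intro M hM
      cases k with
      | zero => exact absurd hM (Set.notMem_empty M)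
      | succ m =>
        exact TOp_mono (TIter_succ_mono m) (ih m (Nat.lt_succ_self m) hM)
    rintro L ⟨hprod, hblock⟩
    have hnb : ¬ ∃ σ ∈ remSet P (TIter (fun i => P i ∪ Q i) J k),
        σ.2.head ∈ con L ∧ (σ.2.body : Set Lit) ⊆ star J := by
      rintro ⟨σ, hσmem, hσcon, hσb⟩
      by_cases hrej : rejIn (fun i => P i ∪ Q i) (TIter (fun i => P i ∪ Q i) J k) σ.1 σ.2
      · obtain ⟨j, hij, τ, hτ, hτcon, hτb⟩ := hrej
        rcases hτ with hτ | hτ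
        · exact hσmem.2 ⟨j, hij, τ, hτ, hτcon, hτb⟩
        · have hhS := hτb (Finset.mem_coe.mpr (htaut j τ hτ))
          obtain ⟨-, hblk⟩ := hmemS _ hhS
          exact hblk ⟨σ, hσmem, mem_con_comm hτcon, hσb⟩
      · exact hblock ⟨σ, ⟨Or.inl hσmem.1, hrej⟩, hσcon, hσb⟩
    rcases hprod with ⟨x, hx, hh, hb⟩ | hd
    · rcases hx.1 with hxP | hxQ
      · exact ⟨Or.inl ⟨x, ⟨hxP, fun h =>
          hx.2 (rejIn_mono_prog (fun i => Set.subset_union_left) h)⟩, hh, hb⟩, hnb⟩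
      · exact hmemS L (hb (by rw [← hh]; exact Finset.mem_coe.mpr (htaut x.1 x.2 hxQ)))
    · exact ⟨Or.inr hd, hnb⟩

lemma dir2a {n : ℕ} {P Q : Fin n → Set Rule}
    (htaut : ∀ i : Fin n, ∀ π ∈ Q i, π.head ∈ π.body)
    {J : Set OLit}
    (hfix : star J = ⋃ k, TIter (fun i => P i ∪ Q i) J k) :
    ∀ k, TIter (fun i => P i ∪ Q i) J k ⊆ TIter P J k := by
  intro k
  induction k with
  | zero => exact subset_rfl
  | succ k ih => exact (claim_PQ htaut hfix k).trans (TOp_mono ih)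

lemma TOp_sub_star {n : ℕ} {P Q : Fin n → Set Rule}
    (htaut : ∀ i : Fin n, ∀ π ∈ Q i, π.head ∈ π.body)
    {J : Set OLit}
    (hfix : star J = ⋃ k, TIter (fun i => P i ∪ Q i) J k)
    {S : Set Lit} (hS : S ⊆ star J) : TOp P J S ⊆ star J := by
  rintro L ⟨hprod, hblock⟩
  rcases hprod with ⟨x, hx, hh, hb⟩ | ⟨l, hl, rfl⟩
  · by_contra hLs
    obtain ⟨M, hMcon, hMs⟩ := exists_con_mem_star hLs
    rw [hfix, Set.mem_iUnion] at hMs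
    obtain ⟨m, hMm⟩ := hMs
    cases m with
    | zero => exact Set.notMem_empty M hMm
    | succ m =>
      obtain ⟨-, hblk⟩ := claim_PQ htaut hfix m hMm
      refine hblk ⟨x, remSet_anti (TIter_sub_star hfix m) hx, ?_, hb.trans hS⟩
      rw [hh]
      exact mem_con_comm hMcon
  · exact ndef_mem_star.mpr hl

lemma extRD_iff {n : ℕ} {P Q : Fin n → Set Rule}
    (htaut : ∀ i : Fin n, ∀ π ∈ Q i, π.head ∈ π.body) (J : Set OLit) :
    isExtRD (fun i => P i ∪ Q i) J ↔ isExtRD P J := by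
  constructor
  · rintro ⟨hJ, hfix⟩
    refine ⟨hJ, Set.Subset.antisymm ?_ ?_⟩
    · rw [hfix]
      exact Set.iUnion_mono (dir2a htaut hfix)
    · rw [Set.iUnion_subset_iff]
      intro k
      induction k with
      | zero => exact Set.empty_subset _
      | succ k ih => exact TOp_sub_star htaut hfix ih
  · rintro ⟨hJ, hfix⟩
    refine ⟨hJ, ?_⟩
    rw [hfix]
    exact (Set.iUnion_congr fun k => dir1_iter htaut hJ hfix k).symm

/-- immunity to tautologies: adding sets of tautologies to the
components of a DLP does not change its extended WS- and RD-models. -/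
theorem immunity_to_tautologies (n : ℕ) (P Q : Fin n → Set Rule)
    (htaut : ∀ i : Fin n, ∀ π ∈ Q i, π.head ∈ π.body) :
    {J : Set OLit | isExtWS (fun i => P i ∪ Q i) J} = {J : Set OLit | isExtWS P J} ∧
    {J : Set OLit | isExtRD (fun i => P i ∪ Q i) J} = {J : Set OLit | isExtRD P J} := by
  constructor
  · ext J
    simp only [Set.mem_setOf_eq]
    exact extWS_iff htaut J
  · ext J
    simp only [Set.mem_setOf_eq]
    exact extRD_iff htaut J

end RuleUpdates
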